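/- arXiv:2307.13421 — 2 statements merged into one kernel-verified Lean document; each statement's English description precedes it below -/
import Mathlib

section
/- (Theorem 1, hard attention.) In the linear-orthogonal setting, fix α ∈ [0,1] and let μ : [0,∞) → ℝ be differentiable with μ(0) = 0 and μ'(t) = α β(t) / exp(μ(t)) for all t ≥ 0, where β(t) = exp(μ(t)) / ( exp(μ(t)) + C − 1 ). Then for every t ≥ 0 the fixed-focus hard-attention population loss L^{FF,HA}_α is Fréchet differentiable at W(t) := μ(t) D and (d/dt) W(t) = −∇ L^{FF,HA}_α(W(t)); that is, t ↦ μ(t) D is a gradient-flow trajectory of L^{FF,HA}_α started from the zero matrix. -/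
/-!
On the ray `W = c • D` every noise token is a.e. orthogonal to every row of `W`, so all noise
logits vanish there. Differentiating under the integral (log-softmax is `2`-Lipschitz and the
noise has a first moment), the derivative of the noise part at such a point is a fixed linear
functional evaluated at the noise mean, hence zero. The signal token `s y` sees the logits
`c (δ_{ly} - 1/C)`, whose softmax puts `e^c / (e^c + C - 1)` on `y` and `1 / (e^c + C - 1)`
elsewhere; averaging over the classes, the gradient of the loss at `c • D` is
`-(α / (e^c + C - 1)) • D`. Since `α β / e^μ = α / (e^μ + C - 1)`, the curve `μ(t) D` moves
along the negative gradient.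
-/

open scoped RealInnerProductSpace BigOperators
open MeasureTheory

noncomputable def softmax {ι : Type*} [Fintype ι] (z : ι → ℝ) (k : ι) : ℝ :=
  Real.exp (z k) / ∑ l, Real.exp (z l)

open Real

lemma exp_add_sub_one_pos (c : ℝ) {n : ℝ} (hn : 1 ≤ n) : 0 < exp c + n - 1 := by
  linarith [exp_pos c]

section Softmax

variable {ι : Type*} [Fintype ι]

lemma sum_exp_pos [Nonempty ι] (z : ι → ℝ) : 0 < ∑ l, exp (z l) :=
  Finset.sum_pos (fun _ _ => exp_pos _) Finset.univ_nonempty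

lemma log_softmax [Nonempty ι] (z : ι → ℝ) (k : ι) :
    log (softmax z k) = z k - log (∑ l, exp (z l)) := by
  rw [softmax, log_div (exp_ne_zero _) (sum_exp_pos z).ne', log_exp]

lemma softmax_nonneg (z : ι → ℝ) (k : ι) : 0 ≤ softmax z k := by
  unfold softmax; positivity

lemma sum_softmax [Nonempty ι] (z : ι → ℝ) : ∑ k, softmax z k = 1 := by
  simp only [softmax, ← Finset.sum_div, div_self (sum_exp_pos z).ne']

lemma softmax_add_const (z : ι → ℝ) (c : ℝ) : softmax (fun l => z l + c) = softmax z := by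
  ext k
  simp only [softmax, exp_add, ← Finset.sum_mul]
  exact mul_div_mul_right _ _ (exp_ne_zero c)

lemma softmax_single [DecidableEq ι] (y : ι) (c : ℝ) (k : ι) :
    softmax (Pi.single y c : ι → ℝ) k =
      (if k = y then exp c else 1) / (exp c + Fintype.card ι - 1) := by
  have hexp : ∀ l, exp ((Pi.single y c : ι → ℝ) l) = 1 + (Pi.single y (exp c - 1) : ι → ℝ) l :=
    fun l => by by_cases hl : l = y <;> simp [hl]
  have hsum : ∑ l, exp ((Pi.single y c : ι → ℝ) l) = exp c + Fintype.card ι - 1 := by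
    simp only [hexp, Finset.sum_add_distrib, Finset.sum_pi_single', Finset.mem_univ, if_true,
      Finset.sum_const, Finset.card_univ, nsmul_eq_mul, mul_one]
    ring
  rw [softmax, hsum]
  by_cases hk : k = y <;> simp [hk]

noncomputable def logSoftmaxDeriv (y : ι) (z : ι → ℝ) : (ι → ℝ) →L[ℝ] ℝ :=
  ContinuousLinearMap.proj (R := ℝ) (φ := fun _ : ι => ℝ) y -
    ∑ l, softmax z l • ContinuousLinearMap.proj (R := ℝ) (φ := fun _ : ι => ℝ) l

lemma logSoftmaxDeriv_apply (y : ι) (z u : ι → ℝ) :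
    logSoftmaxDeriv y z u = u y - ∑ l, softmax z l * u l := by
  simp [logSoftmaxDeriv]

lemma logSoftmaxDeriv_add_const (y : ι) (z : ι → ℝ) (c : ℝ) :
    logSoftmaxDeriv y (fun l => z l + c) = logSoftmaxDeriv y z := by
  simp only [logSoftmaxDeriv, softmax_add_const]

lemma logSoftmaxDeriv_single_apply [Nonempty ι] [DecidableEq ι] (y : ι) (c : ℝ) (u : ι → ℝ) :
    logSoftmaxDeriv y (Pi.single y c) u =
      (Fintype.card ι * u y - ∑ l, u l) / (exp c + Fintype.card ι - 1) := by
  have hS := exp_add_sub_one_pos c (n := Fintype.card ι) (by exact_mod_cast Fintype.card_pos)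
  have h : ∀ l, softmax (Pi.single y c) l * u l =
      u l / (exp c + Fintype.card ι - 1) +
        (Pi.single y ((exp c - 1) * u y / (exp c + Fintype.card ι - 1)) : ι → ℝ) l := by
    intro l
    rw [softmax_single]
    by_cases hl : l = y
    · subst hl; simp; ring
    · simp [hl, div_eq_inv_mul]
  rw [logSoftmaxDeriv_apply]
  simp only [h, Finset.sum_add_distrib, ← Finset.sum_div, Finset.sum_pi_single', Finset.mem_univ,
    if_true]
  field_simp
  ring

variable [Nonempty ι]

lemma hasFDerivAt_log_softmax (y : ι) (z : ι → ℝ) :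
    HasFDerivAt (fun z => log (softmax z y)) (logSoftmaxDeriv y z) z := by
  have hsum : HasFDerivAt (fun z : ι → ℝ => ∑ l, exp (z l))
      (∑ l, exp (z l) • ContinuousLinearMap.proj (R := ℝ) (φ := fun _ : ι => ℝ) l) z :=
    HasFDerivAt.fun_sum fun l _ => (hasFDerivAt_apply l z).exp
  refine (((hasFDerivAt_apply y z).sub (hsum.log (sum_exp_pos z).ne')).congr_fderiv ?_)
    |>.congr_of_eventuallyEq (.of_forall (log_softmax · y))
  simp only [logSoftmaxDeriv, softmax, Finset.smul_sum, smul_smul, div_eq_inv_mul]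

lemma continuous_logSoftmaxDeriv (y : ι) : Continuous (logSoftmaxDeriv y) := by
  unfold logSoftmaxDeriv softmax
  fun_prop (disch := exact fun z => (sum_exp_pos z).ne')

lemma norm_logSoftmaxDeriv_le (y : ι) (z : ι → ℝ) : ‖logSoftmaxDeriv y z‖ ≤ 2 := by
  refine ContinuousLinearMap.opNorm_le_bound _ zero_le_two fun u => ?_
  have hu : ∀ l, ‖u l‖ ≤ ‖u‖ := norm_le_pi_norm u
  calc ‖logSoftmaxDeriv y z u‖ ≤ ‖u y‖ + ∑ l, softmax z l * ‖u l‖ := by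
        rw [logSoftmaxDeriv_apply]
        refine (norm_sub_le _ _).trans ?_
        gcongr
        refine (norm_sum_le _ _).trans_eq ?_
        simp [abs_of_nonneg (softmax_nonneg z _)]
    _ ≤ ‖u‖ + ∑ l, softmax z l * ‖u‖ := by
        gcongr with l _
        · exact hu y
        · exact softmax_nonneg z l
        · exact hu l
    _ = 2 * ‖u‖ := by rw [← Finset.sum_mul, sum_softmax]; ring

lemma lipschitzWith_log_softmax (y : ι) : LipschitzWith 2 (fun z : ι → ℝ => log (softmax z y)) :=
  lipschitzWith_of_nnnorm_fderiv_le (fun z => (hasFDerivAt_log_softmax y z).differentiableAt)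
    fun z => by
      rw [(hasFDerivAt_log_softmax y z).fderiv, ← NNReal.coe_le_coe, coe_nnnorm]
      exact norm_logSoftmaxDeriv_le y z

end Softmax

/-- Real `ι × d` matrices, as families of rows, with the Frobenius inner product. -/
abbrev WeightMatrix (ι : Type*) (d : ℕ) := PiLp 2 fun _ : ι => EuclideanSpace ℝ (Fin d)

section Logits

variable {ι : Type*} {d : ℕ}

lemma continuous_inner_rows (W : WeightMatrix ι d) :
    Continuous fun b : EuclideanSpace ℝ (Fin d) => fun i => ⟪W i, b⟫ :=
  continuous_pi fun _ => continuous_const.inner continuous_id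

variable [Fintype ι]

lemma norm_inner_rows_le (v : EuclideanSpace ℝ (Fin d)) (W : WeightMatrix ι d) :
    ‖fun i => ⟪W i, v⟫‖ ≤ ‖v‖ * ‖W‖ :=
  (pi_norm_le_iff_of_nonneg (by positivity)).2 fun i =>
    (norm_inner_le_norm _ _).trans <| by nlinarith [PiLp.norm_apply_le W i, norm_nonneg v]

noncomputable def logits : EuclideanSpace ℝ (Fin d) →L[ℝ] WeightMatrix ι d →L[ℝ] (ι → ℝ) :=
  LinearMap.mkContinuous₂
    (LinearMap.mk₂ ℝ (fun v W i => ⟪W i, v⟫)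
      (fun v v' W => by ext; simp [inner_add_right])
      (fun c v W => by ext; simp [inner_smul_right])
      (fun v W W' => by ext; simp [inner_add_left])
      (fun c v W => by ext; simp [real_inner_smul_left]))
    1 fun v W => by rw [one_mul]; exact norm_inner_rows_le v W

@[simp]
lemma logits_apply (v : EuclideanSpace ℝ (Fin d)) (W : WeightMatrix ι d) (i : ι) :
    logits v W i = ⟪W i, v⟫ :=
  rfl

lemma norm_logits_le (v : EuclideanSpace ℝ (Fin d)) :
    ‖(logits v : WeightMatrix ι d →L[ℝ] (ι → ℝ))‖ ≤ ‖v‖ :=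
  ContinuousLinearMap.opNorm_le_bound _ (norm_nonneg v) (norm_inner_rows_le v)

variable [Nonempty ι]

lemma hasFDerivAt_log_softmax_inner (y : ι) (v : EuclideanSpace ℝ (Fin d))
    (W : WeightMatrix ι d) :
    HasFDerivAt (fun W : WeightMatrix ι d => log (softmax (fun i => ⟪W i, v⟫) y))
      ((logSoftmaxDeriv y (logits v W)).comp (logits v)) W :=
  (hasFDerivAt_log_softmax y _).comp W (logits v).hasFDerivAt

lemma norm_logSoftmaxDeriv_comp_logits_le (y : ι) (z : ι → ℝ) (v : EuclideanSpace ℝ (Fin d)) :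
    ‖(logSoftmaxDeriv y z).comp (logits v : WeightMatrix ι d →L[ℝ] (ι → ℝ))‖ ≤ 2 * ‖v‖ :=
  (ContinuousLinearMap.opNorm_comp_le _ _).trans <|
    mul_le_mul (norm_logSoftmaxDeriv_le y z) (norm_logits_le v) (norm_nonneg _) zero_le_two

end Logits

section NoiseIntegral

variable {ι : Type*} [Fintype ι] [Nonempty ι] {d : ℕ} {ρ : Measure (EuclideanSpace ℝ (Fin d))}

lemma integrable_logSoftmaxDeriv_comp_logits (hρ : Integrable (fun x => x) ρ) (y : ι)
    (W₀ : WeightMatrix ι d) :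
    Integrable (fun b => (logSoftmaxDeriv y (logits b W₀)).comp (logits b)) ρ :=
  Integrable.mono' (hρ.norm.const_mul 2)
    (((continuous_logSoftmaxDeriv y).comp (logits.continuous.clm_apply continuous_const)).clm_comp
      logits.continuous).aestronglyMeasurable
    (.of_forall fun b => norm_logSoftmaxDeriv_comp_logits_le y _ b)

variable [IsFiniteMeasure ρ]

lemma integrable_log_softmax_inner (hρ : Integrable (fun x => x) ρ) (y : ι)
    (W : WeightMatrix ι d) :
    Integrable (fun b => log (softmax (fun i => ⟪W i, b⟫) y)) ρ := by
  have hf := lipschitzWith_log_softmax y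
  refine Integrable.mono'
    ((integrable_const ‖log (softmax 0 y)‖).add (hρ.norm.const_mul (2 * ‖W‖)))
    (hf.continuous.comp (continuous_inner_rows W)).aestronglyMeasurable (.of_forall fun b => ?_)
  calc ‖log (softmax (fun i => ⟪W i, b⟫) y)‖
      ≤ ‖log (softmax 0 y)‖ + 2 * ‖(fun i => ⟪W i, b⟫) - 0‖ :=
        (norm_le_norm_add_norm_sub' _ _).trans (by gcongr; exact_mod_cast hf.norm_sub_le _ _)
    _ ≤ ‖log (softmax 0 y)‖ + 2 * ‖W‖ * ‖b‖ := by
        rw [sub_zero]; nlinarith [norm_inner_rows_le b W]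

lemma hasFDerivAt_integral_log_softmax_inner (hρ : Integrable (fun x => x) ρ) (y : ι)
    (W₀ : WeightMatrix ι d) :
    HasFDerivAt (fun W : WeightMatrix ι d => ∫ b, log (softmax (fun i => ⟪W i, b⟫) y) ∂ρ)
      (∫ b, (logSoftmaxDeriv y (logits b W₀)).comp (logits b) ∂ρ) W₀ :=
  hasFDerivAt_integral_of_dominated_of_fderiv_le Filter.univ_mem
    (.of_forall fun W => (integrable_log_softmax_inner hρ y W).aestronglyMeasurable)
    (integrable_log_softmax_inner hρ y W₀)
    (integrable_logSoftmaxDeriv_comp_logits hρ y W₀).aestronglyMeasurable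
    (.of_forall fun b _ _ => norm_logSoftmaxDeriv_comp_logits_le y _ b) (hρ.norm.const_mul 2)
    (.of_forall fun b W _ => hasFDerivAt_log_softmax_inner y b W)

lemma hasFDerivAt_integral_log_softmax_inner_of_ae_inner_eq_zero
    (hρ : Integrable (fun x => x) ρ) (hmean : ∫ x, x ∂ρ = 0) (y : ι) {W₀ : WeightMatrix ι d}
    (hW₀ : ∀ᵐ b ∂ρ, ∀ i, ⟪W₀ i, b⟫ = 0) :
    HasFDerivAt (fun W : WeightMatrix ι d => ∫ b, log (softmax (fun i => ⟪W i, b⟫) y) ∂ρ)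
      (0 : WeightMatrix ι d →L[ℝ] ℝ) W₀ := by
  refine (hasFDerivAt_integral_log_softmax_inner hρ y W₀).congr_fderiv ?_
  refine ContinuousLinearMap.ext fun U => ?_
  rw [ContinuousLinearMap.integral_apply (𝕜 := ℝ)
    (integrable_logSoftmaxDeriv_comp_logits hρ y W₀) U, zero_apply]
  -- where the logits of `b` vanish the integrand is a fixed linear functional `ℓ` of `b`, so the
  -- integral is `ℓ` at the mean of `ρ`
  let ℓ : EuclideanSpace ℝ (Fin d) →L[ℝ] ℝ :=
    (logSoftmaxDeriv y 0).comp (ContinuousLinearMap.pi fun i => innerSL ℝ (U i))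
  calc ∫ b, (logSoftmaxDeriv y (logits b W₀)).comp (logits b) U ∂ρ = ∫ b, ℓ b ∂ρ := by
        refine integral_congr_ae ?_
        filter_upwards [hW₀] with b hb
        rw [show logits b W₀ = 0 from funext hb]
        rfl
    _ = 0 := by rw [ℓ.integral_comp_comm hρ, hmean, map_zero]

end NoiseIntegral

noncomputable def hardAttentionLoss {C d : ℕ} (s : Fin C → EuclideanSpace ℝ (Fin d))
    (ρ : Measure (EuclideanSpace ℝ (Fin d))) (α : ℝ) (m : ℕ) (W : WeightMatrix (Fin C) d) : ℝ :=
  (C : ℝ)⁻¹ * ∑ y : Fin C,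
    (-(α * log (softmax (fun i => ⟪W i, s y⟫) y))
      - ((1 - α) / ((m : ℝ) - 1)) * ∑ _j : Fin (m - 1),
          ∫ b, log (softmax (fun i => ⟪W i, b⟫) y) ∂ρ)

section Loss

variable {C d : ℕ} {s : Fin C → EuclideanSpace ℝ (Fin d)} {D : WeightMatrix (Fin C) d}

lemma logits_smul_centered (hs : Orthonormal ℝ s)
    (hD : ∀ k, D k = s k - (C : ℝ)⁻¹ • ∑ k', s k') (c : ℝ) (y : Fin C) :
    logits (s y) (c • D) = fun l => (Pi.single y c : Fin C → ℝ) l + -(c / C) := by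
  funext l
  by_cases hl : l = y
  · subst hl
    simp [hD, inner_sub_left, real_inner_smul_left, sum_inner, orthonormal_iff_ite.mp hs, hs.1]
    ring
  · simp [hD, inner_sub_left, real_inner_smul_left, sum_inner, orthonormal_iff_ite.mp hs, hl]
    ring

variable {ρ : Measure (EuclideanSpace ℝ (Fin d))}

lemma ae_inner_smul_centered_eq_zero (hD : ∀ k, D k = s k - (C : ℝ)⁻¹ • ∑ k', s k')
    (horth : ∀ᵐ x ∂ρ, ∀ k, ⟪x, s k⟫ = 0) (c : ℝ) : ∀ᵐ b ∂ρ, ∀ i, ⟪(c • D) i, b⟫ = 0 := by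
  filter_upwards [horth] with b hb i
  simp [hD, real_inner_comm b, inner_sub_right, real_inner_smul_right, inner_sum, hb]

variable [NeZero C] [IsFiniteMeasure ρ]

lemma hasFDerivAt_hardAttentionLoss (hρ : Integrable (fun x => x) ρ) (hmean : ∫ x, x ∂ρ = 0)
    (α : ℝ) (m : ℕ) {W₀ : WeightMatrix (Fin C) d} (hW₀ : ∀ᵐ b ∂ρ, ∀ i, ⟪W₀ i, b⟫ = 0) :
    HasFDerivAt (hardAttentionLoss s ρ α m)
      ((C : ℝ)⁻¹ • ∑ y, -(α • (logSoftmaxDeriv y (logits (s y) W₀)).comp (logits (s y)))) W₀ := by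
  have h := (HasFDerivAt.fun_sum (u := Finset.univ) fun y _ =>
    ((hasFDerivAt_log_softmax_inner y (s y) W₀).const_mul α).neg.sub
      ((HasFDerivAt.fun_sum (u := Finset.univ) fun (_ : Fin (m - 1)) _ =>
        hasFDerivAt_integral_log_softmax_inner_of_ae_inner_eq_zero hρ hmean y hW₀).const_mul
          ((1 - α) / ((m : ℝ) - 1)))).const_mul (C : ℝ)⁻¹
  exact h.congr_fderiv (by simp)

lemma hasGradientAt_hardAttentionLoss_smul (hs : Orthonormal ℝ s)
    (hD : ∀ k, D k = s k - (C : ℝ)⁻¹ • ∑ k', s k') (hρ : Integrable (fun x => x) ρ)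
    (hmean : ∫ x, x ∂ρ = 0) (horth : ∀ᵐ x ∂ρ, ∀ k, ⟪x, s k⟫ = 0) (α : ℝ) (m : ℕ) (c : ℝ) :
    HasGradientAt (hardAttentionLoss s ρ α m) (-(α / (exp c + C - 1)) • D) (c • D) := by
  rw [hasGradientAt_iff_hasFDerivAt]
  have hderiv := hasFDerivAt_hardAttentionLoss (s := s) hρ hmean α m
    (ae_inner_smul_centered_eq_zero hD horth c)
  refine hderiv.congr_fderiv (ContinuousLinearMap.ext fun U => ?_)
  rw [InnerProductSpace.toDual_apply_apply, real_inner_smul_left, PiLp.inner_apply]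
  simp only [smul_apply, FunLike.coe_sum, Finset.sum_apply, neg_apply,
    ContinuousLinearMap.comp_apply, logits_smul_centered hs hD, logSoftmaxDeriv_add_const,
    logSoftmaxDeriv_single_apply, logits_apply, Fintype.card_fin, hD, smul_eq_mul,
    real_inner_comm (U _), inner_sub_right, real_inner_smul_right, inner_sum]
  -- the average over `y` of the class-`y` terms `C ⟪U y, s y⟫ - ∑ l, ⟪U l, s y⟫` is `⟪U, D⟫`
  have hcentered : (C : ℝ)⁻¹ * ∑ x, (C * ⟪U x, s x⟫ - ∑ l, ⟪U l, s x⟫) =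
      ∑ x, (⟪U x, s x⟫ - (C : ℝ)⁻¹ * ∑ i, ⟪U x, s i⟫) := by
    have hswap : ∑ x, ∑ l, ⟪U l, s x⟫ = ∑ x, ∑ i, ⟪U x, s i⟫ := Finset.sum_comm
    simp only [mul_sub, ← mul_assoc, inv_mul_cancel₀ (NeZero.ne (C : ℝ)), one_mul,
      Finset.sum_sub_distrib, ← Finset.mul_sum, hswap]
  rw [← hcentered, Finset.mul_sum, Finset.mul_sum, Finset.mul_sum]
  exact Finset.sum_congr rfl fun x _ => by ring

end Loss

set_option maxHeartbeats 1000000 in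
set_option synthInstance.maxHeartbeats 800000 in
/-- Theorem 1, hard attention: in the linear-orthogonal setting, `t ↦ μ(t) D`
is a gradient-flow trajectory (from the zero matrix) of the fixed-focus hard-attention
population loss, where `μ' = α β / exp(μ)` with `β = exp(μ)/(exp(μ)+C−1)`. -/
theorem fixed_focus_hard_attention_gradient_flow
    (d C m : ℕ) (hd : 1 ≤ d) (hC : 2 ≤ C) (hm : 2 ≤ m)
    (s : Fin C → EuclideanSpace ℝ (Fin d)) (hs : Orthonormal ℝ s)
    (ρ : Measure (EuclideanSpace ℝ (Fin d))) [IsProbabilityMeasure ρ]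
    (hρ_int : Integrable (fun x => x) ρ)
    (hρ_mean : ∫ x, x ∂ρ = 0)
    (hρ_orth : ∀ᵐ x ∂ρ, ∀ k, ⟪x, s k⟫ = 0)
    (α : ℝ) (hα : α ∈ Set.Icc (0 : ℝ) 1)
    (D : PiLp 2 fun _ : Fin C => EuclideanSpace ℝ (Fin d))
    (hD : ∀ k, D k = s k - (C : ℝ)⁻¹ • ∑ k', s k')
    (μ : ℝ → ℝ) (hμ0 : μ 0 = 0)
    (β : ℝ → ℝ) (hβ : ∀ t, β t = Real.exp (μ t) / (Real.exp (μ t) + C - 1))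
    (hμ : ∀ t, 0 ≤ t → HasDerivAt μ (α * β t / Real.exp (μ t)) t)
    (L : (PiLp 2 fun _ : Fin C => EuclideanSpace ℝ (Fin d)) → ℝ)
    (hL : ∀ W, L W = (C : ℝ)⁻¹ * ∑ y : Fin C,
      (-(α * Real.log (softmax (fun i => ⟪W i, s y⟫) y))
        - ((1 - α) / ((m : ℝ) - 1)) * ∑ _j : Fin (m - 1),
            ∫ b, Real.log (softmax (fun i => ⟪W i, b⟫) y) ∂ρ)) :
    ∀ t, 0 ≤ t → ∃ g, HasGradientAt L g (μ t • D) ∧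
      HasDerivAt (fun τ => μ τ • D) (-g) t := by
  intro t ht
  have : NeZero C := ⟨by omega⟩
  have hS := exp_add_sub_one_pos (μ t) (n := C) (by exact_mod_cast NeZero.one_le)
  have hspeed : α * β t / exp (μ t) = α / (exp (μ t) + C - 1) := by
    rw [hβ]
    field_simp
  refine ⟨-(α / (exp (μ t) + C - 1)) • D, ?_, ?_⟩
  · rw [show L = hardAttentionLoss s ρ α m from funext fun W => by rw [hL, hardAttentionLoss]]
    exact hasGradientAt_hardAttentionLoss_smul hs hD hρ_int hρ_mean hρ_orth α m (μ t)
  · simpa [hspeed] using (hμ t ht).smul_const D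
end

section
/- In the linear-orthogonal setting, for every α ∈ [0,1] and every μ ∈ ℝ, the fixed-focus soft-attention population loss along the ansatz direction satisfies L^{FF,SA}_α( μ D ) = log( 1 + (C−1) exp(−α μ) ). Consequently, for α > 0, L^{FF,SA}_α( μ D ) is strictly decreasing in μ and tends to 0 as μ → ∞. -/
open scoped RealInnerProductSpace BigOperators
open MeasureTheory Filter

section Softmax

variable {ι : Type*} [Fintype ι]

theorem neg_log_softmax (z : ι → ℝ) (k : ι) :
    -Real.log (softmax z k) = Real.log (∑ l, Real.exp (z l - z k)) := by
  have hsum : ∑ l, Real.exp (z l - z k) = (∑ l, Real.exp (z l)) / Real.exp (z k) := by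
    simp only [Real.exp_sub, Finset.sum_div]
  rw [softmax, hsum, ← Real.log_inv, inv_div]

theorem neg_log_softmax_ite_add [DecidableEq ι] (y : ι) (t c : ℝ) :
    -Real.log (softmax (fun i => (if i = y then t else 0) + c) y)
      = Real.log (1 + (Fintype.card ι - 1) * Real.exp (-t)) := by
  have hoff : ∀ l ∈ Finset.univ.erase y,
      Real.exp (((if l = y then t else 0) + c) - ((if y = y then t else 0) + c))
        = Real.exp (-t) := by
    intro l hl
    simp [Finset.ne_of_mem_erase hl]
  rw [neg_log_softmax, ← Finset.add_sum_erase _ _ (Finset.mem_univ y), Finset.sum_congr rfl hoff,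
    Finset.sum_const, Finset.card_erase_of_mem (Finset.mem_univ y), Finset.card_univ,
    nsmul_eq_mul, Nat.cast_sub (Fintype.card_pos_iff.2 ⟨y⟩)]
  simp

end Softmax

section Orthonormal

variable {ι E : Type*} [Fintype ι] [NormedAddCommGroup E] [InnerProductSpace ℝ E]

theorem inner_sub_smul_sum_of_forall_inner_eq_zero (s : ι → E) (i : ι) (c : ℝ) {x : E}
    (hx : ∀ k, ⟪x, s k⟫ = 0) : ⟪s i - c • ∑ k, s k, x⟫ = 0 := by
  rw [real_inner_comm]
  simp [inner_sub_right, real_inner_smul_right, inner_sum, hx]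

theorem Orthonormal.inner_sub_smul_sum [DecidableEq ι] {s : ι → E} (hs : Orthonormal ℝ s)
    (i y : ι) (c : ℝ) : ⟪s i - c • ∑ k, s k, s y⟫ = (if i = y then 1 else 0) - c := by
  simp [inner_sub_left, real_inner_smul_left, sum_inner, orthonormal_iff_ite.mp hs]

theorem Orthonormal.inner_smul_sub_smul_sum_add [DecidableEq ι] {s : ι → E}
    (hs : Orthonormal ℝ s) (i y : ι) (μ α c : ℝ) {v : E} (hv : ∀ k, ⟪v, s k⟫ = 0) :
    ⟪μ • (s i - c • ∑ k, s k), α • s y + v⟫ = (if i = y then α * μ else 0) + -(α * μ * c) := by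
  rw [real_inner_smul_left, inner_add_right, real_inner_smul_right, hs.inner_sub_smul_sum,
    inner_sub_smul_sum_of_forall_inner_eq_zero s i c hv]
  split_ifs <;> ring

end Orthonormal

theorem ae_pi_forall_of_ae {ι α : Type*} [Fintype ι] [MeasurableSpace α] {ρ : Measure α}
    [SigmaFinite ρ] {p : α → Prop} (h : ∀ᵐ x ∂ρ, p x) :
    ∀ᵐ b ∂(Measure.pi fun _ : ι => ρ), ∀ j, p (b j) :=
  eventually_all.2 fun _ => Measure.tendsto_eval_ae_ae.eventually h

section LossProfile

variable {a α : ℝ}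

theorem strictAnti_log_one_add_mul_exp_neg (ha : 0 < a) (hα : 0 < α) :
    StrictAnti fun μ : ℝ => Real.log (1 + a * Real.exp (-(α * μ))) := by
  intro μ ν hμν
  have hexp : Real.exp (-(α * ν)) < Real.exp (-(α * μ)) := by gcongr
  exact Real.log_lt_log (by positivity) (by gcongr)

theorem tendsto_log_one_add_mul_exp_neg_atTop (hα : 0 < α) :
    Tendsto (fun μ : ℝ => Real.log (1 + a * Real.exp (-(α * μ)))) atTop (nhds 0) := by
  have hexp : Tendsto (fun μ : ℝ => Real.exp (-(α * μ))) atTop (nhds 0) :=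
    Real.tendsto_exp_atBot.comp
      (tendsto_neg_atTop_atBot.comp (tendsto_id.const_mul_atTop hα))
  have hlog := ((hexp.const_mul a).const_add 1).log (by norm_num)
  simpa using hlog

end LossProfile

theorem fixed_focus_soft_attention_loss_along_ansatz_general
    (d C m : ℕ) (hC : 2 ≤ C)
    (s : Fin C → EuclideanSpace ℝ (Fin d)) (hs : Orthonormal ℝ s)
    (ρ : Measure (EuclideanSpace ℝ (Fin d))) [IsProbabilityMeasure ρ]
    (hρ_orth : ∀ᵐ x ∂ρ, ∀ k, ⟪x, s k⟫ = 0)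
    (α : ℝ)
    (D : Fin C → EuclideanSpace ℝ (Fin d))
    (hD : ∀ k, D k = s k - (C : ℝ)⁻¹ • ∑ k', s k')
    (L : (Fin C → EuclideanSpace ℝ (Fin d)) → ℝ)
    (hL : ∀ W, L W = (C : ℝ)⁻¹ * ∑ y : Fin C,
      ∫ b : Fin (m - 1) → EuclideanSpace ℝ (Fin d),
        -Real.log (softmax (fun i =>
          ⟪W i, α • s y + ((1 - α) / ((m : ℝ) - 1)) • ∑ j, b j⟫) y)
        ∂(Measure.pi fun _ => ρ)) :
    (∀ μ : ℝ, L (μ • D) = Real.log (1 + (C - 1) * Real.exp (-(α * μ)))) ∧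
    (0 < α → StrictAnti (fun μ : ℝ => L (μ • D)) ∧
      Tendsto (fun μ : ℝ => L (μ • D)) atTop (nhds 0)) := by
  have hloss (μ : ℝ) : L (μ • D) = Real.log (1 + (C - 1) * Real.exp (-(α * μ))) := by
    have hintegrand (y : Fin C) : ∀ᵐ b ∂(Measure.pi fun _ : Fin (m - 1) => ρ),
        -Real.log (softmax (fun i =>
          ⟪(μ • D) i, α • s y + ((1 - α) / ((m : ℝ) - 1)) • ∑ j, b j⟫) y)
          = Real.log (1 + (C - 1) * Real.exp (-(α * μ))) := by
      filter_upwards [ae_pi_forall_of_ae hρ_orth] with b hb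
      have hv : ∀ k, ⟪((1 - α) / ((m : ℝ) - 1)) • ∑ j, b j, s k⟫ = 0 := fun k => by
        simp [real_inner_smul_left, sum_inner, hb]
      simp_rw [Pi.smul_apply, hD, hs.inner_smul_sub_smul_sum_add _ y μ α _ hv]
      rw [neg_log_softmax_ite_add, Fintype.card_fin]
    have hC0 : (C : ℝ) ≠ 0 := Nat.cast_ne_zero.2 (by omega)
    rw [hL, Finset.sum_congr rfl fun y _ => integral_congr_ae (hintegrand y)]
    simp [hC0]
  refine ⟨hloss, fun hα => ?_⟩
  have hC1 : (0 : ℝ) < C - 1 := sub_pos.2 (Nat.one_lt_cast.2 hC)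
  simp_rw [hloss]
  exact ⟨strictAnti_log_one_add_mul_exp_neg hC1 hα, tendsto_log_one_add_mul_exp_neg_atTop hα⟩

/-- in the linear-orthogonal setting, along the ansatz direction `D` the
fixed-focus soft-attention population loss equals `log(1 + (C−1)exp(−αμ))`; for `α > 0` it is
strictly decreasing in `μ` and tends to `0` as `μ → ∞`. -/
theorem fixed_focus_soft_attention_loss_along_ansatz
    (d C m : ℕ) (hd : 1 ≤ d) (hC : 2 ≤ C) (hm : 2 ≤ m)
    (s : Fin C → EuclideanSpace ℝ (Fin d)) (hs : Orthonormal ℝ s)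
    (ρ : Measure (EuclideanSpace ℝ (Fin d))) [IsProbabilityMeasure ρ]
    (hρ_int : Integrable (fun x => x) ρ)
    (hρ_mean : ∫ x, x ∂ρ = 0)
    (hρ_orth : ∀ᵐ x ∂ρ, ∀ k, ⟪x, s k⟫ = 0)
    (α : ℝ) (hα : α ∈ Set.Icc (0 : ℝ) 1)
    (D : Fin C → EuclideanSpace ℝ (Fin d))
    (hD : ∀ k, D k = s k - (C : ℝ)⁻¹ • ∑ k', s k')
    (L : (Fin C → EuclideanSpace ℝ (Fin d)) → ℝ)
    (hL : ∀ W, L W = (C : ℝ)⁻¹ * ∑ y : Fin C,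
      ∫ b : Fin (m - 1) → EuclideanSpace ℝ (Fin d),
        -Real.log (softmax (fun i =>
          ⟪W i, α • s y + ((1 - α) / ((m : ℝ) - 1)) • ∑ j, b j⟫) y)
        ∂(Measure.pi fun _ => ρ)) :
    (∀ μ : ℝ, L (μ • D) = Real.log (1 + (C - 1) * Real.exp (-(α * μ)))) ∧
    (0 < α → StrictAnti (fun μ : ℝ => L (μ • D)) ∧
      Tendsto (fun μ : ℝ => L (μ • D)) atTop (nhds 0)) :=
  fixed_focus_soft_attention_loss_along_ansatz_general d C m hC s hs ρ hρ_orth α D hD L hL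
end
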